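/- arXiv:1607.06214 — 3 statements merged into one kernel-verified Lean document; each statement's English description precedes it below -/
import Mathlib

section
/- Let q(t) = t² − B with B ∈ ℝ, and let Z = {t ∈ ℝ : |q(t)| < δ} for δ > 0. Then the Lebesgue measure of Z satisfies μ(Z) ≤ 4·min(√δ, δ/√B) (where the second term is interpreted as +∞ if B ≤ 0). -/
/-!
Since `|t² − B| < δ` means `B − δ < t² < B + δ`, the set `Z` lies in
`{t | √(B − δ) ≤ |t| < √(B + δ)}`, of measure at most `2 (√(B + δ) − √(B − δ))`. This difference of
square roots is at most `√(2δ)` by subadditivity of the square root, and at most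
`2δ / √(B + δ) ≤ 2δ / √B` by rationalising.
-/

open MeasureTheory Set

namespace Real

lemma sqrt_sub_sqrt_le_sqrt_sub (x y : ℝ) : √x - √y ≤ √(x - y) := by
  rw [sub_le_iff_le_add', sqrt_le_left (by positivity)]
  nlinarith [sq_sqrt' (x := y), sq_sqrt' (x := x - y), le_max_left y 0, le_max_left (x - y) 0,
    mul_nonneg (sqrt_nonneg y) (sqrt_nonneg (x - y))]

lemma sqrt_sub_sqrt_le_div_sqrt {x y : ℝ} (hyx : y ≤ x) : √x - √y ≤ (x - y) / √x := by
  rcases le_or_gt x 0 with hx | hx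
  · simp [sqrt_eq_zero'.2 hx, sqrt_eq_zero'.2 (hyx.trans hx)]
  rw [le_div_iff₀ (sqrt_pos.2 hx)]
  have hyy : y ≤ √y * √y := by
    rcases le_total 0 y with hy | hy
    · rw [mul_self_sqrt hy]
    · nlinarith [sqrt_nonneg y]
  nlinarith [mul_self_sqrt hx.le, mul_le_mul_of_nonneg_left (sqrt_le_sqrt hyx) (sqrt_nonneg y)]

end Real

lemma volume_abs_preimage_Ico_le (a b : ℝ) :
    volume ((|·|) ⁻¹' Ico a b) ≤ ENNReal.ofReal (2 * (b - a)) := by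
  have hsub : (|·|) ⁻¹' Ico a b ⊆ Ioc (-b) (-a) ∪ Ico a b := by
    intro t ht
    obtain ⟨hat, htb⟩ : a ≤ |t| ∧ |t| < b := ht
    rcases le_total 0 t with ht | ht
    · rw [abs_of_nonneg ht] at hat htb
      exact Or.inr ⟨hat, htb⟩
    · rw [abs_of_nonpos ht] at hat htb
      exact Or.inl ⟨by linarith, by linarith⟩
  calc volume ((|·|) ⁻¹' Ico a b)
      ≤ volume (Ioc (-b) (-a)) + volume (Ico a b) :=
        (measure_mono hsub).trans (measure_union_le _ _)
    _ = ENNReal.ofReal (b - a) + ENNReal.ofReal (b - a) := by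
      rw [Real.volume_Ioc, Real.volume_Ico, neg_sub_neg]
    _ = ENNReal.ofReal (2 * (b - a)) := by
      rcases le_total 0 (b - a) with h | h
      · rw [← ENNReal.ofReal_add h h, two_mul]
      · rw [ENNReal.ofReal_of_nonpos h, ENNReal.ofReal_of_nonpos (by linarith), add_zero]

-- When `B < δ` the junk value `√(B − δ) = 0` makes the right-hand side the single interval
-- `(-√(B + δ), √(B + δ))`.
lemma setOf_abs_sq_sub_lt_subset (B δ : ℝ) :
    {t : ℝ | |t ^ 2 - B| < δ} ⊆ (|·|) ⁻¹' Ico √(B - δ) √(B + δ) := by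
  intro t ht
  rw [mem_ofPred_eq, abs_lt] at ht
  rw [mem_preimage, ← Real.sqrt_sq_eq_abs]
  exact ⟨Real.sqrt_le_sqrt (by linarith), Real.sqrt_lt_sqrt (sq_nonneg t) (by linarith)⟩

lemma volume_setOf_abs_sq_sub_lt_le (B δ : ℝ) :
    volume {t : ℝ | |t ^ 2 - B| < δ} ≤ ENNReal.ofReal (2 * (√(B + δ) - √(B - δ))) :=
  (measure_mono (setOf_abs_sq_sub_lt_subset B δ)).trans (volume_abs_preimage_Ico_le _ _)

/-- μ{t : |t² − B| < δ} ≤ 4·min(√δ, δ/√B), the second term read as +∞ when B ≤ 0. -/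
theorem stmt_0 (B δ : ℝ) (hδ : 0 < δ) :
    volume {t : ℝ | |t ^ 2 - B| < δ} ≤ ENNReal.ofReal (4 * Real.sqrt δ) ∧
      (0 < B → volume {t : ℝ | |t ^ 2 - B| < δ} ≤ ENNReal.ofReal (4 * (δ / Real.sqrt B))) := by
  have hwidth : B + δ - (B - δ) = 2 * δ := by ring
  refine ⟨(volume_setOf_abs_sq_sub_lt_le B δ).trans (ENNReal.ofReal_le_ofReal ?_),
    fun hB => (volume_setOf_abs_sq_sub_lt_le B δ).trans (ENNReal.ofReal_le_ofReal ?_)⟩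
  · have hsqrt : √(2 * δ) ≤ 2 * √δ := by
      rw [Real.sqrt_le_left (by positivity), mul_pow, Real.sq_sqrt hδ.le]
      linarith
    linarith [hwidth ▸ Real.sqrt_sub_sqrt_le_sqrt_sub (B + δ) (B - δ)]
  · calc 2 * (√(B + δ) - √(B - δ)) ≤ 2 * (2 * δ / √(B + δ)) := by
          rw [← hwidth]; gcongr; exact Real.sqrt_sub_sqrt_le_div_sqrt (by linarith)
      _ ≤ 2 * (2 * δ / √B) := by
          have := Real.sqrt_pos.2 hB
          gcongr
          linarith
      _ = 4 * (δ / √B) := by ring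
end

section
/- Let ν, Θ be unit vectors in ℝⁿ with Θ·ν = cos α, α ∈ (0, π), and let ψ ∈ S(ν^⊥) (Schwartz on the hyperplane ν^⊥). Define Ψ(σν + ξ) = ψ(ξ) for σ ∈ ℝ, ξ ∈ ν^⊥ (constant in direction ν). Then the inverse Fourier transform of Ψ along Θ satisfies (F_Θ^{−1}Ψ)(tΘ + ξ_{Θ^⊥}) = (sin α)^{−1} e^{iℓt cot α} (F_{ν_⊥}^{−1}ψ)((t/sin α) ν_⊥ + ξ_{⊥⊥}), where ν_⊥ is the unit vector in the (Θ,ν)-plane perpendicular to ν (positively oriented), ℓ = ξ_{Θ^⊥}·Θ_⊥, and ξ_{⊥⊥} is the component of tΘ + ξ_{Θ^⊥} perpendicular to the (Θ,ν)-plane. -/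
open MeasureTheory
open scoped RealInnerProductSpace

/-!
Writing `s = sin α`, `c = cos α` and `ℓ = ⟪ξ, Θp⟫`, the point `τΘ + ξ` with its `ν`-component
removed is `(sτ - ℓc) νp + (ξ - ℓ Θp)`. So the affine substitution `σ = sτ - ℓc` turns the
integral along `Θ` into the one along `νp`; its Jacobian gives the factor `s⁻¹` and its
shift the phase `e^{iℓt cot α}`.
-/

theorem integral_eq_smul_integral_comp_mul_sub {E : Type*} [NormedAddCommGroup E]
    [NormedSpace ℝ E] (f : ℝ → E) {a : ℝ} (ha : 0 < a) (b : ℝ) :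
    ∫ x, f x = a • ∫ τ, f (a * τ - b) := by
  rw [Measure.integral_comp_mul_left (fun x => f (x - b)) a, integral_sub_right_eq_self,
    abs_of_pos (inv_pos.2 ha), smul_inv_smul₀ ha.ne']

theorem eq_smul_sub_smul_of_decomp {V : Type*} [AddCommGroup V] [Module ℝ V]
    {ν Θ νp Θp : V} {c s : ℝ} (hsc : s ^ 2 + c ^ 2 = 1) (hs : s ≠ 0)
    (hΘ : Θ = c • ν + s • νp) (hν : ν = c • Θ + s • Θp) :
    Θp = s • ν - c • νp := by
  refine smul_right_injective V hs ?_
  calc s • Θp = ν - c • Θ := by rw [hν]; module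
    _ = (s ^ 2 + c ^ 2 - c ^ 2) • ν - (c * s) • νp := by rw [hΘ, hsc]; module
    _ = s • (s • ν - c • νp) := by module

theorem smul_add_sub_inner_smul_eq_of_decomp {E : Type*} [NormedAddCommGroup E]
    [InnerProductSpace ℝ E] {ν Θ νp Θp ξ : E} {c s : ℝ}
    (hΘ : Θ = c • ν + s • νp) (hν : ν = c • Θ + s • Θp) (hΘp : Θp = s • ν - c • νp)
    (hcos : ⟪Θ, ν⟫ = c) (hξ : ⟪ξ, Θ⟫ = 0) (τ : ℝ) :
    (τ • Θ + ξ) - ⟪τ • Θ + ξ, ν⟫ • ν = (s * τ - ⟪ξ, Θp⟫ * c) • νp + (ξ - ⟪ξ, Θp⟫ • Θp) := by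
  have hξν : ⟪ξ, ν⟫ = s * ⟪ξ, Θp⟫ := by
    rw [hν, inner_add_right, real_inner_smul_right, real_inner_smul_right, hξ]
    ring
  rw [inner_add_left, real_inner_smul_left, hcos, hξν]
  generalize ⟪ξ, Θp⟫ = ℓ
  rw [hΘ, hΘp]
  module

theorem exp_mul_exp_affine_phase {ℓ t c s τ : ℝ} (hs : s ≠ 0) :
    Complex.exp (Complex.I * ℓ * t * (c / s)) *
        Complex.exp (Complex.I * (t / s) * (s * τ - ℓ * c : ℝ)) =
      Complex.exp (Complex.I * t * τ) := by
  rw [← Complex.exp_add]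
  congr 1
  have hs' : (s : ℂ) ≠ 0 := by exact_mod_cast hs
  push_cast
  field_simp
  ring

theorem stmt_14_general (n : ℕ) (ν Θ νp Θp : EuclideanSpace ℝ (Fin n))
    (α : ℝ) (hα : α ∈ Set.Ioo 0 Real.pi) (hcos : ⟪Θ, ν⟫ = Real.cos α)
    (hΘdec : Θ = Real.cos α • ν + Real.sin α • νp)
    (hνdec : ν = Real.cos α • Θ + Real.sin α • Θp)
    (ψ : SchwartzMap (EuclideanSpace ℝ (Fin n)) ℂ)
    (t : ℝ) (ξ : EuclideanSpace ℝ (Fin n)) (hξ : ⟪ξ, Θ⟫ = 0) :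
    (Real.sqrt (2 * Real.pi))⁻¹ *
        ∫ τ : ℝ, Complex.exp (Complex.I * t * τ) *
          ψ ((τ • Θ + ξ) - ⟪τ • Θ + ξ, ν⟫ • ν) =
      ((Real.sin α)⁻¹ : ℂ) *
        Complex.exp (Complex.I * (⟪ξ, Θp⟫ : ℝ) * t * (Real.cos α / Real.sin α)) *
        ((Real.sqrt (2 * Real.pi))⁻¹ *
          ∫ σ : ℝ, Complex.exp (Complex.I * (t / Real.sin α) * σ) *
            ψ (σ • νp + (ξ - (⟪ξ, Θp⟫ : ℝ) • Θp))) := by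
  have hs : 0 < Real.sin α := Real.sin_pos_of_pos_of_lt_pi hα.1 hα.2
  have hΘp := eq_smul_sub_smul_of_decomp (Real.sin_sq_add_cos_sq α) hs.ne' hΘdec hνdec
  have hsC : (Real.sin α : ℂ) ≠ 0 := by exact_mod_cast hs.ne'
  rw [mul_left_comm]
  congr 1
  symm
  rw [integral_eq_smul_integral_comp_mul_sub _ hs (⟪ξ, Θp⟫ * Real.cos α), Complex.real_smul,
    mul_mul_mul_comm, inv_mul_cancel₀ hsC, one_mul, ← integral_const_mul]
  congr 1 with τ
  rw [smul_add_sub_inner_smul_eq_of_decomp hΘdec hνdec hΘp hcos hξ,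
    ← exp_mul_exp_affine_phase hs.ne']
  exact (mul_assoc _ _ _).symm

/-- Formula for the inverse Fourier transform along Θ of a function Ψ(σν + ξ) = ψ(ξ)
that is constant in the direction ν, when Θ is not parallel to ν. -/
theorem stmt_14 (n : ℕ) (ν Θ νp Θp : EuclideanSpace ℝ (Fin n))
    (hν : ‖ν‖ = 1) (hΘ : ‖Θ‖ = 1) (hνp : ‖νp‖ = 1) (hΘp : ‖Θp‖ = 1)
    (α : ℝ) (hα : α ∈ Set.Ioo 0 Real.pi) (hcos : ⟪Θ, ν⟫ = Real.cos α)
    (hνpν : ⟪νp, ν⟫ = 0) (hΘpΘ : ⟪Θp, Θ⟫ = 0)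
    (hΘdec : Θ = Real.cos α • ν + Real.sin α • νp)
    (hνdec : ν = Real.cos α • Θ + Real.sin α • Θp)
    (ψ : SchwartzMap (EuclideanSpace ℝ (Fin n)) ℂ)
    (t : ℝ) (ξ : EuclideanSpace ℝ (Fin n)) (hξ : ⟪ξ, Θ⟫ = 0) :
    (Real.sqrt (2 * Real.pi))⁻¹ *
        ∫ τ : ℝ, Complex.exp (Complex.I * t * τ) *
          ψ ((τ • Θ + ξ) - ⟪τ • Θ + ξ, ν⟫ • ν) =
      ((Real.sin α)⁻¹ : ℂ) *
        Complex.exp (Complex.I * (⟪ξ, Θp⟫ : ℝ) * t * (Real.cos α / Real.sin α)) *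
        ((Real.sqrt (2 * Real.pi))⁻¹ *
          ∫ σ : ℝ, Complex.exp (Complex.I * (t / Real.sin α) * σ) *
            ψ (σ • νp + (ξ - (⟪ξ, Θp⟫ : ℝ) • Θp))) :=
  stmt_14_general n ν Θ νp Θp α hα hcos hΘdec hνdec ψ t ξ hξ
end

section
/- There is no constant C > 0 such that for every bounded open D_s ⊂ ℝ³, every f ∈ L²(D_s), and the Newtonian potential solution u(x) = (1/(4π))∫ f(y)/|x−y| dy of Δu = −f, the estimate ‖u‖_{L²(D_r)} ≤ C√(d_r d_s)‖f‖_{L²(D_s)} holds for all bounded D_r. Concretely: taking f = characteristic function of the ball B_A(0) and D_r = B_R(c) with |c| = 2R and R ≫ A, one has u(x) ≥ (1/(4π))·(4πA³/3)/(3R) on B_R(c), so ‖u‖_{L²(B_R(c))} ≥ c₀ A³ R^{1/2}, while C√(d_r d_s)‖f‖_{L²} = C' A^{5/2} R^{1/2}, and A³ > C'' A^{5/2} for A large. -/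
/-!
Take `f` the indicator of `B_A(0)` and `D_r = B_A(c)` with `‖c‖ = 3A`. Every `x ∈ D_r` and
`y ∈ D_s` satisfy `A < ‖x - y‖ < 5A`, so `u ≥ |B_A| / (20πA) = A² / 15` on `D_r` and
`‖u‖_{L²(D_r)} ≥ (A² / 15) |B_A|^{1/2}`, while the right-hand side is at most
`C · 2A · |B_A|^{1/2}`. Hence the estimate forces `A ≤ 30C`, which fails for `A = 30C + 1`.
-/

open MeasureTheory Metric Real
open scoped ENNReal

local notation "ℝ³" => EuclideanSpace ℝ (Fin 3)

section InverseDistance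

variable {X : Type*} [PseudoMetricSpace X] [MeasurableSpace X] {μ : Measure X} {s : Set X} {x : X}
  {δ D : ℝ}

lemma setIntegral_inv_dist_le_measureReal_div (hμs : μ s ≠ ∞) (hδ : 0 < δ)
    (hxδ : ∀ y ∈ s, δ ≤ dist x y) :
    ∫ y in s, (dist x y)⁻¹ ∂μ ≤ μ.real s / δ := by
  rw [div_eq_inv_mul]
  refine (Real.le_norm_self _).trans (norm_setIntegral_le_of_norm_le_const hμs.lt_top fun y hy ↦ ?_)
  rw [norm_inv, Real.norm_of_nonneg dist_nonneg]
  exact inv_anti₀ hδ (hxδ y hy)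

variable [OpensMeasurableSpace X]

lemma integrableOn_inv_dist (hs : MeasurableSet s) (hμs : μ s ≠ ∞) (hδ : 0 < δ)
    (hx : ∀ y ∈ s, δ ≤ dist x y) : IntegrableOn (fun y ↦ (dist x y)⁻¹) s μ := by
  refine Measure.integrableOn_of_bounded (M := δ⁻¹) hμs
    (continuous_const.dist continuous_id).measurable.inv.aestronglyMeasurable ?_
  filter_upwards [ae_restrict_mem hs] with y hy
  rw [norm_inv, Real.norm_of_nonneg dist_nonneg]
  exact inv_anti₀ hδ (hx y hy)

lemma measureReal_div_le_setIntegral_inv_dist (hs : MeasurableSet s) (hμs : μ s ≠ ∞)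
    (hδ : 0 < δ) (hxδ : ∀ y ∈ s, δ ≤ dist x y) (hxD : ∀ y ∈ s, dist x y ≤ D) :
    μ.real s / D ≤ ∫ y in s, (dist x y)⁻¹ ∂μ := by
  rw [div_eq_inv_mul]
  refine setIntegral_ge_of_const_le_real hs hμs (fun y hy ↦ ?_)
    (integrableOn_inv_dist hs hμs hδ hxδ)
  exact inv_anti₀ (hδ.trans_le (hxδ y hy)) (hxD y hy)

end InverseDistance

lemma dist_mem_Ioo_of_mem_ball {X : Type*} [PseudoMetricSpace X] {x y c z : X} {r a : ℝ}
    (hx : x ∈ ball c r) (hy : y ∈ ball z a) :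
    dist x y ∈ Set.Ioo (dist c z - r - a) (dist c z + r + a) := by
  rw [mem_ball] at hx hy
  refine ⟨?_, ?_⟩
  · linarith [dist_triangle4 c x y z, dist_comm c x]
  · linarith [dist_triangle4 x c z y, dist_comm z y]

lemma sq_mul_measureReal_le_setIntegral_sq {α : Type*} [MeasurableSpace α] {μ : Measure α}
    {t : Set α} {g : α → ℝ} {m M : ℝ} (hg : AEStronglyMeasurable g μ) (ht : MeasurableSet t)
    (hμt : μ t ≠ ∞) (hm : 0 ≤ m) (hlow : ∀ x ∈ t, m ≤ g x) (hup : ∀ x ∈ t, g x ≤ M) :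
    m ^ 2 * μ.real t ≤ ∫ x in t, g x ^ 2 ∂μ := by
  refine setIntegral_ge_of_const_le_real ht hμt
    (fun x hx ↦ pow_le_pow_left₀ hm (hlow x hx) 2) ?_
  refine Measure.integrableOn_of_bounded (M := M ^ 2) hμt (hg.pow 2) ?_
  filter_upwards [ae_restrict_mem ht] with x hx
  rw [Real.norm_of_nonneg (sq_nonneg _)]
  exact pow_le_pow_left₀ (hm.trans (hlow x hx)) (hup x hx) 2

noncomputable def newtonPotential (f : ℝ³ → ℝ) (x : ℝ³) : ℝ :=
  (1 / (4 * π)) * ∫ y, f y / ‖x - y‖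

lemma measurable_newtonPotential {f : ℝ³ → ℝ} (hf : Measurable f) :
    Measurable (newtonPotential f) := by
  have hg : StronglyMeasurable fun p : ℝ³ × ℝ³ ↦ f p.2 / ‖p.1 - p.2‖ :=
    ((hf.comp measurable_snd).div (measurable_fst.sub measurable_snd).norm).stronglyMeasurable
  exact measurable_const.mul hg.integral_prod_right'.measurable

lemma newtonPotential_indicator_one {s : Set ℝ³} (hs : MeasurableSet s) (x : ℝ³) :
    newtonPotential (s.indicator 1) x = (1 / (4 * π)) * ∫ y in s, (dist x y)⁻¹ := by
  rw [newtonPotential, ← integral_indicator hs]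
  congr 2 with y
  by_cases hy : y ∈ s <;> simp [hy, dist_eq_norm]

lemma measureReal_div_le_newtonPotential_indicator_one {s : Set ℝ³} {x : ℝ³} {δ D : ℝ}
    (hs : MeasurableSet s) (hμs : volume s ≠ ∞) (hδ : 0 < δ)
    (hxδ : ∀ y ∈ s, δ ≤ dist x y) (hxD : ∀ y ∈ s, dist x y ≤ D) :
    volume.real s / (4 * π * D) ≤ newtonPotential (s.indicator 1) x := by
  rw [newtonPotential_indicator_one hs]
  calc volume.real s / (4 * π * D) = 1 / (4 * π) * (volume.real s / D) := by ring
    _ ≤ _ := by gcongr; exact measureReal_div_le_setIntegral_inv_dist hs hμs hδ hxδ hxD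

lemma newtonPotential_indicator_one_le_measureReal_div {s : Set ℝ³} {x : ℝ³} {δ : ℝ}
    (hs : MeasurableSet s) (hμs : volume s ≠ ∞) (hδ : 0 < δ)
    (hxδ : ∀ y ∈ s, δ ≤ dist x y) :
    newtonPotential (s.indicator 1) x ≤ volume.real s / (4 * π * δ) := by
  rw [newtonPotential_indicator_one hs]
  calc _ ≤ 1 / (4 * π) * (volume.real s / δ) := by
        gcongr; exact setIntegral_inv_dist_le_measureReal_div hμs hδ hxδ
    _ = volume.real s / (4 * π * δ) := by ring

lemma volume_real_ball_fin_three (x : ℝ³) {r : ℝ} (hr : 0 ≤ r) :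
    volume.real (ball x r) = 4 * π / 3 * r ^ 3 := by
  rw [Measure.real, EuclideanSpace.volume_ball_fin_three, ENNReal.toReal_mul, ENNReal.toReal_pow,
    ENNReal.toReal_ofReal hr, ENNReal.toReal_ofReal (by positivity)]
  ring

lemma setIntegral_indicator_one_sq {α : Type*} [MeasurableSpace α] {μ : Measure α} {s : Set α}
    (hs : MeasurableSet s) : ∫ x in s, s.indicator (1 : α → ℝ) x ^ 2 ∂μ = μ.real s := by
  rw [← setIntegral_one_eq_measureReal]
  exact setIntegral_congr_fun hs fun x hx ↦ by simp [hx]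

lemma sq_mul_volume_le_integral_newtonPotential_indicator_ball_sq {A : ℝ} (hA : 0 < A) {c : ℝ³}
    (hc : ‖c‖ = 3 * A) :
    (A ^ 2 / 15) ^ 2 * volume.real (ball (0 : ℝ³) A) ≤
      ∫ x in ball c A, newtonPotential ((ball 0 A).indicator 1) x ^ 2 := by
  have hdist : ∀ x ∈ ball c A, ∀ y ∈ ball 0 A, A ≤ dist x y ∧ dist x y ≤ 5 * A := by
    intro x hx y hy
    obtain ⟨hlow, hup⟩ := dist_mem_Ioo_of_mem_ball hx hy
    rw [dist_zero_right, hc] at hlow hup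
    constructor <;> linarith
  have hV (x : ℝ³) : volume.real (ball x A) = 4 * π / 3 * A ^ 3 :=
    volume_real_ball_fin_three x hA.le
  have := sq_mul_measureReal_le_setIntegral_sq
    (measurable_newtonPotential (measurable_one.indicator measurableSet_ball)).aestronglyMeasurable
    measurableSet_ball (measure_ball_lt_top (μ := volume)).ne (by positivity)
    (fun x hx ↦ measureReal_div_le_newtonPotential_indicator_one measurableSet_ball
      measure_ball_lt_top.ne hA (fun y hy ↦ (hdist x hx y hy).1) fun y hy ↦ (hdist x hx y hy).2)
    (fun x hx ↦ newtonPotential_indicator_one_le_measureReal_div measurableSet_ball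
      measure_ball_lt_top.ne hA fun y hy ↦ (hdist x hx y hy).1)
  convert this using 2 <;> simp only [hV]
  field_simp
  ring

/-- No constant C > 0 makes the diameter estimate
‖u‖_{L²(D_r)} ≤ C √(d_r d_s) ‖f‖_{L²(D_s)} hold for the Newtonian potential
u(x) = (1/(4π)) ∫ f(y)/|x−y| dy in ℝ³. -/
theorem stmt_19 :
    ¬ ∃ C : ℝ, 0 < C ∧
      ∀ Ds : Set (EuclideanSpace ℝ (Fin 3)), IsOpen Ds → Bornology.IsBounded Ds →
        ∀ f : EuclideanSpace ℝ (Fin 3) → ℝ, Function.support f ⊆ Ds →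
          MemLp f 2 volume →
          ∀ Dr : Set (EuclideanSpace ℝ (Fin 3)), Bornology.IsBounded Dr →
            Real.sqrt (∫ x in Dr,
                ((1 / (4 * Real.pi)) * ∫ y, f y / ‖x - y‖) ^ 2) ≤
              C * Real.sqrt (Metric.diam Dr * Metric.diam Ds) *
                Real.sqrt (∫ x in Ds, f x ^ 2) := by
  rintro ⟨C, hC, h⟩
  set A := 30 * C + 1
  have hA : 0 < A := by positivity
  obtain ⟨c, hc⟩ := exists_norm_eq ℝ³ (by positivity : 0 ≤ 3 * A)
  have hV : 0 < volume.real (ball (0 : ℝ³) A) := by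
    rw [volume_real_ball_fin_three 0 hA.le]; positivity
  set V := volume.real (ball (0 : ℝ³) A)
  have hdiam : √(diam (ball c A) * diam (ball (0 : ℝ³) A)) ≤ 2 * A := by
    rw [← Real.sqrt_mul_self (by positivity : 0 ≤ 2 * A)]
    gcongr <;> exact diam_ball hA.le
  have key := h (ball 0 A) isOpen_ball isBounded_ball ((ball 0 A).indicator 1)
    Set.support_indicator_subset
    (memLp_indicator_const 2 measurableSet_ball 1 (Or.inr measure_ball_lt_top.ne))
    (ball c A) isBounded_ball
  rw [setIntegral_indicator_one_sq measurableSet_ball] at key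
  have : A ^ 2 / 15 * √V ≤ 2 * A * C * √V := calc
    _ = √((A ^ 2 / 15) ^ 2 * V) := by
        rw [Real.sqrt_mul' _ hV.le, Real.sqrt_sq (by positivity)]
    _ ≤ _ := Real.sqrt_le_sqrt (sq_mul_volume_le_integral_newtonPotential_indicator_ball_sq hA hc)
    _ ≤ C * √(diam (ball c A) * diam (ball (0 : ℝ³) A)) * √V := key
    _ ≤ C * (2 * A) * √V := by gcongr
    _ = _ := by ring
  nlinarith [le_of_mul_le_mul_right this (Real.sqrt_pos.mpr hV)]
end
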